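/- Let k ≥ 0 be an integer and let g : [0,1] → ℝ be continuous, strictly positive, and strictly decreasing. Then (−1)^{k+1} · ∫_0^1 g(x) B_{2k+1}(x) dx > 0, where B_{2k+1} is the (2k+1)-st Bernoulli polynomial; that is, the sign of ∫_0^1 g(x) B_{2k+1}(x) dx is (−1)^{k−1}. -/

import Mathlib

/-!
Folding `[0, 1]` about `1/2` and using `B_{2k+1}(1 - x) = -B_{2k+1}(x)` turns the integral into
`∫_0^{1/2} (g(x) - g(1 - x)) B_{2k+1}(x) dx`, where the first factor is positive. On `(0, 1/2)`
the sign of `B_{2k+1}` is `(-1)^{k+1}`: by induction on `k`, since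
`B_{2k+3}'' = (2k+3)(2k+2) B_{2k+1}`, the function `(-1)^{k+2} B_{2k+3}` is strictly concave on
`[0, 1/2]` and vanishes at both endpoints.
-/

open Set MeasureTheory intervalIntegral

theorem iterate_deriv_two_const_mul_bernoulliFun (n : ℕ) (c x : ℝ) :
    deriv^[2] (fun y => c * bernoulliFun (n + 2) y) x
      = (n + 2) * (n + 1) * (c * bernoulliFun n x) := by
  simp only [Function.iterate_succ, Function.iterate_zero, Function.comp_apply,
    deriv_const_mul_field', deriv_bernoulliFun, Nat.cast_add, Nat.cast_ofNat, Nat.add_one_sub_one,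
    Nat.cast_one, add_tsub_cancel_right, id]
  ring

theorem bernoulliFun_eval_zero_of_odd {n : ℕ} (hn : Odd n) (h1 : 1 < n) :
    bernoulliFun n 0 = 0 := by
  rw [bernoulliFun_eval_zero, bernoulli_eq_zero_of_odd hn h1, Rat.cast_zero]

theorem StrictConcaveOn.pos_of_eq_zero_of_eq_zero {f : ℝ → ℝ} {a b x : ℝ}
    (hf : StrictConcaveOn ℝ (Icc a b) f) (ha : f a = 0) (hb : f b = 0) (hx : x ∈ Ioo a b) :
    0 < f x := by
  have hab : a < b := hx.1.trans hx.2
  simpa [ha, hb] using hf.lt_on_openSegment (left_mem_Icc.2 hab.le) (right_mem_Icc.2 hab.le)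
    hab.ne (by rwa [openSegment_eq_Ioo hab])

theorem neg_one_pow_mul_bernoulliFun_odd_pos (k : ℕ) {x : ℝ} (hx : x ∈ Ioo 0 2⁻¹) :
    0 < (-1) ^ (k + 1) * bernoulliFun (2 * k + 1) x := by
  induction k generalizing x with
  | zero =>
    norm_num
    linarith [hx.2]
  | succ k ih =>
    set f : ℝ → ℝ := fun y => (-1) ^ (k + 2) * bernoulliFun (2 * k + 1 + 2) y
    have hconcave : StrictConcaveOn ℝ (Icc 0 2⁻¹) f := by
      refine strictConcaveOn_of_deriv2_neg (convex_Icc _ _) (by fun_prop) fun y hy => ?_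
      rw [interior_Icc] at hy
      rw [iterate_deriv_two_const_mul_bernoulliFun, pow_succ, mul_neg_one, neg_mul, mul_neg]
      exact neg_neg_of_pos (mul_pos (by positivity) (ih hy))
    have h0 : f 0 = 0 := by
      simp [f, bernoulliFun_eval_zero_of_odd (n := 2 * k + 3) ⟨k + 1, by ring⟩ (by omega)]
    have hhalf : f 2⁻¹ = 0 := by
      simp [f, show 2 * k + 1 + 2 = 2 * (k + 1) + 1 by ring, bernoulliFun_eval_half_eq_zero]
    simpa [f, show 2 * k + 1 + 2 = 2 * (k + 1) + 1 by ring] using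
      hconcave.pos_of_eq_zero_of_eq_zero h0 hhalf hx

theorem integral_eq_integral_add_comp_add_sub {F : ℝ → ℝ} {a b : ℝ}
    (hF : IntervalIntegrable F volume a b) :
    ∫ x in a..b, F x = ∫ x in a..(a + b) / 2, (F x + F (a + b - x)) := by
  have hmid : (a + b) / 2 ∈ uIcc a b := mem_uIcc.2 <|
    (le_total a b).imp (fun _ => ⟨by linarith, by linarith⟩) (fun _ => ⟨by linarith, by linarith⟩)
  have hleft : IntervalIntegrable F volume a ((a + b) / 2) :=
    hF.mono_set (uIcc_subset_uIcc left_mem_uIcc hmid)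
  have hright : IntervalIntegrable F volume ((a + b) / 2) b :=
    hF.mono_set (uIcc_subset_uIcc hmid right_mem_uIcc)
  have hreflect : ∫ x in a..(a + b) / 2, F (a + b - x) = ∫ x in (a + b) / 2..b, F x := by
    rw [integral_comp_sub_left]; congr 1 <;> ring
  rw [integral_add hleft, hreflect, integral_add_adjacent_intervals hleft hright]
  simpa [show a + b - (a + b) / 2 = (a + b) / 2 by ring] using (hright.comp_sub_left (a + b)).symm

theorem integral_mul_bernoulliFun_odd {g : ℝ → ℝ} (hg : IntervalIntegrable g volume 0 1) (k : ℕ) :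
    ∫ x in (0:ℝ)..1, g x * bernoulliFun (2 * k + 1) x
      = ∫ x in (0:ℝ)..2⁻¹, (g x - g (1 - x)) * bernoulliFun (2 * k + 1) x := by
  rw [integral_eq_integral_add_comp_add_sub
    (hg.mul_continuousOn (continuous_bernoulliFun _).continuousOn)]
  norm_num only [zero_add]
  congr 1 with x
  rw [bernoulliFun_eval_one_sub, (odd_two_mul_add_one k).neg_one_pow]
  ring

theorem integral_bernoulli_sign (k : ℕ) (g : ℝ → ℝ)
    (hg_cont : ContinuousOn g (Set.Icc 0 1))
    (hg_anti : StrictAntiOn g (Set.Icc 0 1)) :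
    0 < (-1 : ℝ) ^ (k+1) *
      ∫ x in (0:ℝ)..1, g x * (Polynomial.aeval x (Polynomial.bernoulli (2*k+1)) : ℝ) := by
  simp_rw [← Polynomial.eval_map_algebraMap]
  change 0 < _ * ∫ x in (0:ℝ)..1, g x * bernoulliFun (2 * k + 1) x
  have hg_reflect : ContinuousOn (fun x => g (1 - x)) (Icc 0 1) :=
    hg_cont.comp (by fun_prop) fun x hx => ⟨by linarith [hx.2], by linarith [hx.1]⟩
  rw [integral_mul_bernoulliFun_odd (hg_cont.intervalIntegrable_of_Icc zero_le_one),
    ← intervalIntegral.integral_const_mul]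
  refine intervalIntegral_pos_of_pos_on ?_ (fun x hx => ?_) (by norm_num)
  · refine ContinuousOn.intervalIntegrable_of_Icc (by norm_num) ?_
    exact (continuousOn_const.mul ((hg_cont.sub hg_reflect).mul
      (continuous_bernoulliFun _).continuousOn)).mono (Icc_subset_Icc_right (by norm_num))
  · obtain ⟨hx0, hx_half⟩ := hx
    have hg_lt : g (1 - x) < g x :=
      hg_anti ⟨hx0.le, by linarith⟩ ⟨by linarith, by linarith⟩ (by linarith)
    rw [mul_left_comm]
    exact mul_pos (sub_pos.2 hg_lt) (neg_one_pow_mul_bernoulliFun_odd_pos k ⟨hx0, hx_half⟩)
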